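/- Let (Ω, μ) be a probability space, let d be a natural number, let Q_f, Q* : {0,1} × Ω → (0,1) be measurable with contrasts Δ_f(w) = Q_f(1,w) − Q_f(0,w) and Δ*(w) = Q*(1,w) − Q*(0,w), and let L_Y = ∫_Ω Σ_{a∈{0,1}} [Q*(a,w)·log(Q*(a,w)/Q_f(a,w)) + (1−Q*(a,w))·log((1−Q*(a,w))/(1−Q_f(a,w)))] dμ(w). Suppose there are real numbers L_W ≥ 0 and ε ≥ 0 such that L_W + L_Y/(d+1) ≤ ε. Then (∫_Ω (Δ_f(w) − Δ*(w))² dμ(w))^{1/2} ≤ 2·√((d+1)·ε). -/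

import Mathlib

/-!
Pinsker's inequality for Bernoulli laws, `2 (p - q)² ≤ KL(Bern p ‖ Bern q)`, holds because
`q ↦ KL(Bern p ‖ Bern q) - 2 (p - q)²` vanishes at `q = p` and has derivative
`(q - p) (1 - 2q)² / (q (1 - q))`, which has the sign of `q - p`. Since
`(x - y)² ≤ 2x² + 2y²`, the squared contrast error is then bounded pointwise by the sum of the
two Bernoulli divergences, so its integral is at most `L_Y ≤ (d + 1) ε`.
-/

open MeasureTheory Real Set

lemma hasDerivAt_log_const_div {c x : ℝ} (hc : c ≠ 0) (hx : x ≠ 0) :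
    HasDerivAt (fun y => log (c / y)) (-x⁻¹) x := by
  have hdiv : HasDerivAt (fun y => c / y) (-c / x ^ 2) x := by
    simpa [div_eq_mul_inv, neg_div] using (hasDerivAt_inv hx).const_mul c
  convert hdiv.log (div_ne_zero hc hx) using 1
  field_simp

noncomputable def bernoulliKL (p q : ℝ) : ℝ :=
  p * log (p / q) + (1 - p) * log ((1 - p) / (1 - q))

lemma bernoulliKL_self {p : ℝ} (hp : p ∈ Ioo (0 : ℝ) 1) : bernoulliKL p p = 0 := by
  have h1p : 1 - p ≠ 0 := by linarith [hp.2]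
  simp [bernoulliKL, div_self hp.1.ne', div_self h1p]

lemma bernoulliKL_one_sub_one_sub (p q : ℝ) :
    bernoulliKL (1 - p) (1 - q) = bernoulliKL p q := by
  simp only [bernoulliKL, sub_sub_cancel]
  ring

lemma hasDerivAt_bernoulliKL {p q : ℝ} (hp : p ∈ Ioo (0 : ℝ) 1) (hq : q ∈ Ioo (0 : ℝ) 1) :
    HasDerivAt (bernoulliKL p) ((q - p) / (q * (1 - q))) q := by
  have hq1 : 1 - q ≠ 0 := by linarith [hq.2]
  have hlog₀ := hasDerivAt_log_const_div hp.1.ne' hq.1.ne'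
  have hlog₁ := (hasDerivAt_log_const_div (c := 1 - p) (by linarith [hp.2]) hq1).comp q
    ((hasDerivAt_id q).const_sub 1)
  refine ((hlog₀.const_mul p).add (hlog₁.const_mul (1 - p))).congr_deriv ?_
  field_simp [hq.1.ne']
  ring

theorem two_mul_sq_sub_le_bernoulliKL {p q : ℝ} (hp : p ∈ Ioo (0 : ℝ) 1)
    (hq : q ∈ Ioo (0 : ℝ) 1) : 2 * (p - q) ^ 2 ≤ bernoulliKL p q := by
  wlog hpq : p ≤ q generalizing p q
  · have hsymm := this (p := 1 - p) (q := 1 - q) ⟨by linarith [hp.2], by linarith [hp.1]⟩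
      ⟨by linarith [hq.2], by linarith [hq.1]⟩ (by linarith)
    rw [bernoulliKL_one_sub_one_sub] at hsymm
    linarith
  have hsub : Icc p q ⊆ Ioo (0 : ℝ) 1 := Icc_subset_Ioo hp.1 hq.2
  have hderiv : ∀ x ∈ Icc p q, HasDerivAt (fun x => bernoulliKL p x - 2 * (p - x) ^ 2)
      ((x - p) / (x * (1 - x)) + 4 * (p - x)) x := fun x hx => by
    refine ((hasDerivAt_bernoulliKL hp (hsub hx)).sub
      ((((hasDerivAt_id x).const_sub p).pow 2).const_mul 2)).congr_deriv ?_
    simp only [Nat.cast_ofNat, id_eq, mul_neg, mul_one]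
    ring
  have hmono : MonotoneOn (fun x => bernoulliKL p x - 2 * (p - x) ^ 2) (Icc p q) := by
    refine monotoneOn_of_hasDerivWithinAt_nonneg (convex_Icc p q)
      (fun x hx => (hderiv x hx).continuousAt.continuousWithinAt)
      (fun x hx => (hderiv x (interior_subset hx)).hasDerivWithinAt) fun x hx => ?_
    rw [interior_Icc] at hx
    obtain ⟨hx0, hx1⟩ := hsub (Ioo_subset_Icc_self hx)
    have hx' : 0 < x * (1 - x) := mul_pos hx0 (by linarith)
    -- `x (1 - x) ≤ 1/4`, so the derivative is `(x - p) (1 / (x (1 - x)) - 4) ≥ 0`.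
    rw [div_add' _ _ _ hx'.ne']
    exact div_nonneg (by nlinarith [sq_nonneg (1 - 2 * x), hx.1]) hx'.le
  have hpq_le := hmono (left_mem_Icc.2 hpq) (right_mem_Icc.2 hpq) hpq
  simp only [bernoulliKL_self hp, sub_self] at hpq_le
  linarith

lemma sq_sub_sub_sub_le_bernoulliKL_add {f₁ f₀ s₁ s₀ : ℝ} (hf₁ : f₁ ∈ Ioo (0 : ℝ) 1)
    (hf₀ : f₀ ∈ Ioo (0 : ℝ) 1) (hs₁ : s₁ ∈ Ioo (0 : ℝ) 1) (hs₀ : s₀ ∈ Ioo (0 : ℝ) 1) :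
    ((f₁ - f₀) - (s₁ - s₀)) ^ 2 ≤ bernoulliKL s₁ f₁ + bernoulliKL s₀ f₀ := by
  have h₁ := two_mul_sq_sub_le_bernoulliKL hs₁ hf₁
  have h₀ := two_mul_sq_sub_le_bernoulliKL hs₀ hf₀
  nlinarith [sq_nonneg ((s₁ - f₁) + (s₀ - f₀))]

theorem contrast_l2_from_joint_loss_general {Ω : Type*} [MeasurableSpace Ω]
    (μ : Measure Ω) (d : ℕ)
    (Qf Qs : Bool → Ω → ℝ)
    (hQf01 : ∀ a w, Qf a w ∈ Set.Ioo (0 : ℝ) 1)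
    (hQs01 : ∀ a w, Qs a w ∈ Set.Ioo (0 : ℝ) 1)
    (kl : Bool → Ω → ℝ)
    (hkl : ∀ a w, kl a w =
      Qs a w * Real.log (Qs a w / Qf a w) +
        (1 - Qs a w) * Real.log ((1 - Qs a w) / (1 - Qf a w)))
    (hklint : Integrable (fun w => kl true w + kl false w) μ)
    (LY : ℝ) (hLY : LY = ∫ w, (kl true w + kl false w) ∂μ)
    (LW ε : ℝ) (hLW : 0 ≤ LW)
    (hjoint : LW + LY / (d + 1) ≤ ε) :
    Real.sqrt (∫ w,
        ((Qf true w - Qf false w) - (Qs true w - Qs false w)) ^ 2 ∂μ) ≤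
      2 * Real.sqrt ((d + 1) * ε) := by
  have hpointwise : ∀ w, ((Qf true w - Qf false w) - (Qs true w - Qs false w)) ^ 2 ≤
      kl true w + kl false w := fun w => by
    rw [hkl, hkl]
    exact sq_sub_sub_sub_le_bernoulliKL_add (hQf01 true w) (hQf01 false w) (hQs01 true w)
      (hQs01 false w)
  have hintegral : ∫ w, ((Qf true w - Qf false w) - (Qs true w - Qs false w)) ^ 2 ∂μ ≤ LY :=
    hLY ▸ integral_mono_of_nonneg (ae_of_all _ fun w => sq_nonneg _) hklint
      (ae_of_all _ hpointwise)
  have hLY_le : LY ≤ (d + 1) * ε := by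
    rw [← div_le_iff₀' (by positivity)]
    linarith
  calc Real.sqrt (∫ w, ((Qf true w - Qf false w) - (Qs true w - Qs false w)) ^ 2 ∂μ)
      ≤ Real.sqrt ((d + 1) * ε) := Real.sqrt_le_sqrt (hintegral.trans hLY_le)
    _ ≤ 2 * Real.sqrt ((d + 1) * ε) := le_mul_of_one_le_left (Real.sqrt_nonneg _) one_le_two

/-- On a probability space `(Ω, μ)`, for measurable conditional
outcome models `Q_f, Q* : {0,1} × Ω → (0,1)` with balanced Bernoulli KL outcome
loss `L_Y`, if the equal-weight joint reconstruction loss over a row with `d`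
covariate coordinates is controlled, `L_W + L_Y/(d+1) ≤ ε` with `L_W ≥ 0` and
`ε ≥ 0`, then the contrast error satisfies
`‖Δ_f − Δ*‖_{L²(μ)} ≤ 2·√((d+1)·ε)`. -/
theorem contrast_l2_from_joint_loss {Ω : Type*} [MeasurableSpace Ω]
    (μ : Measure Ω) [IsProbabilityMeasure μ] (d : ℕ)
    (Qf Qs : Bool → Ω → ℝ)
    (hQfm : ∀ a, Measurable (Qf a)) (hQsm : ∀ a, Measurable (Qs a))
    (hQf01 : ∀ a w, Qf a w ∈ Set.Ioo (0 : ℝ) 1)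
    (hQs01 : ∀ a w, Qs a w ∈ Set.Ioo (0 : ℝ) 1)
    (kl : Bool → Ω → ℝ)
    (hkl : ∀ a w, kl a w =
      Qs a w * Real.log (Qs a w / Qf a w) +
        (1 - Qs a w) * Real.log ((1 - Qs a w) / (1 - Qf a w)))
    (hklint : Integrable (fun w => kl true w + kl false w) μ)
    (LY : ℝ) (hLY : LY = ∫ w, (kl true w + kl false w) ∂μ)
    (LW ε : ℝ) (hLW : 0 ≤ LW) (hε : 0 ≤ ε)
    (hjoint : LW + LY / (d + 1) ≤ ε) :
    Real.sqrt (∫ w,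
        ((Qf true w - Qf false w) - (Qs true w - Qs false w)) ^ 2 ∂μ) ≤
      2 * Real.sqrt ((d + 1) * ε) :=
  contrast_l2_from_joint_loss_general μ d Qf Qs hQf01 hQs01 kl hkl hklint LY hLY LW ε hLW hjoint
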